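/- Let G be a nontrivial totally ordered abelian group and a > 0 in G, with M_a = {0} ∪ {g ∈ G : g ≥ a}. The following are equivalent: (a) M_a is a unique factorization monoid; (b) M_a is a half-factorial monoid; (c) G is cyclic and a is the least positive element of G (so M_a equals the nonnegative cone of G). -/

import Mathlib

/-- `x` is invertible within the subset `S` of the ambient monoid. -/
def SUnit {A : Type*} [AddCommMonoid A] (S : Set A) (x : A) : Prop := ∃ y ∈ S, x + y = 0

/-- `a` is an atom of the subset (submonoid) `S`: it is non-invertible in `S` and
cannot be written as a sum of two non-invertible elements of `S`. -/
def SAtom {A : Type*} [AddCommMonoid A] (S : Set A) (a : A) : Prop :=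
  a ∈ S ∧ ¬ SUnit S a ∧ ∀ b ∈ S, ∀ c ∈ S, a = b + c → SUnit S b ∨ SUnit S c

/-- `x` is an atomic element of `S`: invertible in `S` or a finite sum of atoms of `S`. -/
def SAtomicElem {A : Type*} [AddCommMonoid A] (S : Set A) (x : A) : Prop :=
  SUnit S x ∨ ∃ l : Multiset A, (∀ a ∈ l, SAtom S a) ∧ l.sum = x

/-- The subset (submonoid) `S` is atomic. -/
def SAtomic {A : Type*} [AddCommMonoid A] (S : Set A) : Prop :=
  ∀ x ∈ S, SAtomicElem S x

/-!
Every element of `{0} ∪ G_{≥a}` lying in `[a, 2a)` is an atom. If some `0 < g < a` existed,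
then `(a + g) + (2a - g) = a + a + a` would be factorizations of lengths 2 and 3, so
half-factoriality forces `a` to be the least positive element of `G`. Then `a` is the only atom,
every factorization of `x` is `x = a + ⋯ + a`, and atomicity says exactly that every positive
element is a natural multiple of `a`, i.e. `G = ℤ a`.
-/

section Factoriality

variable {A : Type*} [AddCommMonoid A]

def SFactorial (S : Set A) : Prop :=
  SAtomic S ∧ ∀ x ∈ S, ∀ l₁ l₂ : Multiset A,
    (∀ b ∈ l₁, SAtom S b) → l₁.sum = x → (∀ b ∈ l₂, SAtom S b) → l₂.sum = x → l₁ = l₂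

def SHalfFactorial (S : Set A) : Prop :=
  SAtomic S ∧ ∀ x ∈ S, ∀ l₁ l₂ : Multiset A,
    (∀ b ∈ l₁, SAtom S b) → l₁.sum = x → (∀ b ∈ l₂, SAtom S b) → l₂.sum = x →
      l₁.card = l₂.card

theorem SFactorial.sHalfFactorial {S : Set A} (h : SFactorial S) : SHalfFactorial S :=
  ⟨h.1, fun x hx l₁ l₂ h₁ s₁ h₂ s₂ => congrArg _ (h.2 x hx l₁ l₂ h₁ s₁ h₂ s₂)⟩

end Factoriality

section ConductiveMonoid

variable {G : Type*} [AddCommGroup G] [LinearOrder G] {a : G}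

def conductiveMonoid (a : G) : Set G := {0} ∪ Set.Ici a

theorem mem_conductiveMonoid {x : G} : x ∈ conductiveMonoid a ↔ x = 0 ∨ a ≤ x := by
  simp [conductiveMonoid]

theorem sUnit_conductiveMonoid_zero : SUnit (conductiveMonoid a) 0 :=
  ⟨0, mem_conductiveMonoid.2 (Or.inl rfl), add_zero 0⟩

variable [IsOrderedAddMonoid G]

theorem eq_zero_of_sUnit_conductiveMonoid (ha : 0 < a) {x : G} (hx : x ∈ conductiveMonoid a)
    (hu : SUnit (conductiveMonoid a) x) : x = 0 := by
  obtain ⟨y, hy, hxy⟩ := hu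
  rcases mem_conductiveMonoid.1 hx, mem_conductiveMonoid.1 hy with ⟨hx0 | hax, rfl | hay⟩
  · exact hx0
  · exact hx0
  · simpa using hxy
  · have : a + a ≤ 0 := hxy ▸ add_le_add hax hay
    exact absurd this (add_pos ha ha).not_ge

theorem sAtom_conductiveMonoid_iff (ha : 0 < a) {x : G} :
    SAtom (conductiveMonoid a) x ↔ a ≤ x ∧ x < a + a := by
  have ha_mem : a ∈ conductiveMonoid a := mem_conductiveMonoid.2 (Or.inr le_rfl)
  constructor
  · rintro ⟨hx, hxu, hsplit⟩
    have hax : a ≤ x := (mem_conductiveMonoid.1 hx).resolve_left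
      (by rintro rfl; exact hxu sUnit_conductiveMonoid_zero)
    refine ⟨hax, lt_of_not_ge fun hx2 => ?_⟩
    have hxa : x - a ∈ conductiveMonoid a :=
      mem_conductiveMonoid.2 (Or.inr (le_sub_iff_add_le.2 hx2))
    rcases hsplit a ha_mem (x - a) hxa (by abel) with hu | hu
    · exact ha.ne' (eq_zero_of_sUnit_conductiveMonoid ha ha_mem hu)
    · rw [sub_eq_zero.1 (eq_zero_of_sUnit_conductiveMonoid ha hxa hu)] at hx2
      exact (lt_add_of_pos_right a ha).not_ge hx2
  · rintro ⟨hax, hx2⟩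
    have hx : x ∈ conductiveMonoid a := mem_conductiveMonoid.2 (Or.inr hax)
    refine ⟨hx, fun hu => ?_, ?_⟩
    · exact ha.not_ge (eq_zero_of_sUnit_conductiveMonoid ha hx hu ▸ hax)
    · rintro b hb c hc rfl
      rcases mem_conductiveMonoid.1 hb, mem_conductiveMonoid.1 hc with ⟨rfl | hab, rfl | hac⟩
      · exact Or.inl sUnit_conductiveMonoid_zero
      · exact Or.inl sUnit_conductiveMonoid_zero
      · exact Or.inr sUnit_conductiveMonoid_zero
      · exact absurd hx2 (add_le_add hab hac).not_gt

theorem sAtom_conductiveMonoid_self (ha : 0 < a) : SAtom (conductiveMonoid a) a :=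
  (sAtom_conductiveMonoid_iff ha).2 ⟨le_rfl, lt_add_of_pos_right a ha⟩

theorem le_of_pos_of_sHalfFactorial (ha : 0 < a) (hhf : SHalfFactorial (conductiveMonoid a))
    {g : G} (hg : 0 < g) : a ≤ g := by
  by_contra! hga
  have hatom_pair : ∀ b ∈ ({a + g, a + (a - g)} : Multiset G), SAtom (conductiveMonoid a) b := by
    simp only [Multiset.insert_eq_cons, Multiset.mem_cons, Multiset.mem_singleton]
    rintro b (rfl | rfl) <;> rw [sAtom_conductiveMonoid_iff ha]
    · exact ⟨le_add_of_nonneg_right hg.le, add_lt_add_right hga a⟩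
    · exact ⟨le_add_of_nonneg_right (sub_nonneg.2 hga.le), add_lt_add_right (sub_lt_self a hg) a⟩
  have hlen := hhf.2 (3 • a) (mem_conductiveMonoid.2 (Or.inr (le_self_nsmul ha.le three_ne_zero)))
    {a + g, a + (a - g)} (Multiset.replicate 3 a) hatom_pair
    (by simp only [Multiset.insert_eq_cons, Multiset.sum_cons, Multiset.sum_singleton]; abel)
    (fun _ hb => (Multiset.eq_of_mem_replicate hb).symm ▸ sAtom_conductiveMonoid_self ha)
    (Multiset.sum_replicate 3 a)
  simp at hlen

theorem eq_replicate_of_forall_sAtom (ha : 0 < a) (hleast : ∀ g : G, 0 < g → a ≤ g)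
    {l : Multiset G} (hl : ∀ b ∈ l, SAtom (conductiveMonoid a) b) :
    l = Multiset.replicate l.card a := by
  refine Multiset.eq_replicate_card.2 fun b hb => ?_
  obtain ⟨hab, hb2⟩ := (sAtom_conductiveMonoid_iff ha).1 (hl b hb)
  by_contra hne
  have : a ≤ b - a := hleast _ (sub_pos.2 (lt_of_le_of_ne hab (Ne.symm hne)))
  exact hb2.not_ge (le_sub_iff_add_le.1 this)

theorem exists_nsmul_eq_of_sHalfFactorial (ha : 0 < a) (hhf : SHalfFactorial (conductiveMonoid a))
    {g : G} (hg : 0 < g) : ∃ n : ℕ, n • a = g := by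
  have hleast := fun g => le_of_pos_of_sHalfFactorial (g := g) ha hhf
  have hgM : g ∈ conductiveMonoid a := mem_conductiveMonoid.2 (Or.inr (hleast _ hg))
  rcases hhf.1 g hgM with hu | ⟨l, hl, rfl⟩
  · exact absurd (eq_zero_of_sUnit_conductiveMonoid ha hgM hu) hg.ne'
  · refine ⟨l.card, ?_⟩
    rw [eq_replicate_of_forall_sAtom ha hleast hl, Multiset.sum_replicate, Multiset.card_replicate]

theorem le_of_pos_of_forall_exists_nsmul_eq (ha : 0 < a)
    (hmul : ∀ g : G, 0 < g → ∃ n : ℕ, n • a = g) {g : G} (hg : 0 < g) : a ≤ g := by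
  obtain ⟨n, rfl⟩ := hmul g hg
  exact le_self_nsmul ha.le (by rintro rfl; simp at hg)

theorem sFactorial_of_forall_exists_nsmul_eq (ha : 0 < a)
    (hmul : ∀ g : G, 0 < g → ∃ n : ℕ, n • a = g) : SFactorial (conductiveMonoid a) := by
  have hleast := fun g => le_of_pos_of_forall_exists_nsmul_eq (g := g) ha hmul
  refine ⟨fun x hx => ?_, fun x _ l₁ l₂ h₁ s₁ h₂ s₂ => ?_⟩
  · rcases mem_conductiveMonoid.1 hx with rfl | hax
    · exact Or.inl sUnit_conductiveMonoid_zero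
    obtain ⟨n, rfl⟩ := hmul x (ha.trans_le hax)
    exact Or.inr ⟨Multiset.replicate n a,
      fun _ hb => (Multiset.eq_of_mem_replicate hb).symm ▸ sAtom_conductiveMonoid_self ha,
      Multiset.sum_replicate n a⟩
  · have hcard : l₁.card = l₂.card := (nsmul_left_strictMono ha).injective <| by
      rw [← Multiset.sum_replicate, ← Multiset.sum_replicate,
        ← eq_replicate_of_forall_sAtom ha hleast h₁, ← eq_replicate_of_forall_sAtom ha hleast h₂,
        s₁, s₂]
    rw [eq_replicate_of_forall_sAtom ha hleast h₁, eq_replicate_of_forall_sAtom ha hleast h₂, hcard]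

theorem forall_exists_zsmul_eq_of_generator (ha : 0 < a) (hleast : ∀ g : G, 0 < g → a ≤ g)
    {b : G} (hb : ∀ g : G, ∃ n : ℤ, g = n • b) (g : G) : ∃ n : ℤ, g = n • a := by
  wlog hb_pos : 0 < b generalizing b
  · refine this (b := -b) (fun g => ?_) ?_
    · obtain ⟨n, rfl⟩ := hb g
      exact ⟨-n, by simp⟩
    · obtain ⟨n, hn⟩ := hb a
      refine neg_pos.2 (lt_of_le_of_ne (not_lt.1 hb_pos) ?_)
      rintro rfl
      simp [ha.ne'] at hn
  obtain ⟨k, hk⟩ := hb a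
  have hk_pos : 0 < k := by
    rw [← zsmul_lt_zsmul_iff_left hb_pos, zero_zsmul, ← hk]
    exact ha
  have hk_le : k ≤ 1 := by
    rw [← zsmul_le_zsmul_iff_left hb_pos, one_zsmul, ← hk]
    exact hleast b hb_pos
  obtain rfl : b = a := by rw [hk, le_antisymm hk_le hk_pos, one_zsmul]
  exact hb g

theorem forall_exists_nsmul_eq_iff (ha : 0 < a) :
    (∀ g : G, 0 < g → ∃ n : ℕ, n • a = g) ↔
      (∃ b : G, ∀ g : G, ∃ n : ℤ, g = n • b) ∧ ∀ g : G, 0 < g → a ≤ g := by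
  refine ⟨fun hmul => ⟨⟨a, fun g => ?_⟩, fun g => le_of_pos_of_forall_exists_nsmul_eq ha hmul⟩,
    fun ⟨⟨b, hb⟩, hleast⟩ g hg => ?_⟩
  · rcases lt_trichotomy g 0 with hg | rfl | hg
    · obtain ⟨n, hn⟩ := hmul (-g) (neg_pos.2 hg)
      exact ⟨-n, by rw [neg_zsmul, natCast_zsmul, hn, neg_neg]⟩
    · exact ⟨0, (zero_zsmul a).symm⟩
    · obtain ⟨n, rfl⟩ := hmul g hg
      exact ⟨n, (natCast_zsmul a n).symm⟩
  · obtain ⟨n, rfl⟩ := forall_exists_zsmul_eq_of_generator ha hleast hb g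
    have hn : 0 ≤ n := by
      rw [← zsmul_le_zsmul_iff_left ha, zero_zsmul]
      exact hg.le
    lift n to ℕ using hn
    exact ⟨n, (natCast_zsmul a n).symm⟩

end ConductiveMonoid

theorem conductive_monoid_uf_iff_hf_general {G : Type*} [AddCommGroup G] [LinearOrder G] [IsOrderedAddMonoid G]
    (a : G) (ha : 0 < a) :
    ((SAtomic ({0} ∪ Set.Ici a : Set G) ∧
      ∀ x ∈ ({0} ∪ Set.Ici a : Set G), ∀ l₁ l₂ : Multiset G,
        (∀ b ∈ l₁, SAtom ({0} ∪ Set.Ici a : Set G) b) → l₁.sum = x →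
        (∀ b ∈ l₂, SAtom ({0} ∪ Set.Ici a : Set G) b) → l₂.sum = x →
        l₁ = l₂) ↔
     (SAtomic ({0} ∪ Set.Ici a : Set G) ∧
      ∀ x ∈ ({0} ∪ Set.Ici a : Set G), ∀ l₁ l₂ : Multiset G,
        (∀ b ∈ l₁, SAtom ({0} ∪ Set.Ici a : Set G) b) → l₁.sum = x →
        (∀ b ∈ l₂, SAtom ({0} ∪ Set.Ici a : Set G) b) → l₂.sum = x →
        l₁.card = l₂.card)) ∧
    ((SAtomic ({0} ∪ Set.Ici a : Set G) ∧
      ∀ x ∈ ({0} ∪ Set.Ici a : Set G), ∀ l₁ l₂ : Multiset G,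
        (∀ b ∈ l₁, SAtom ({0} ∪ Set.Ici a : Set G) b) → l₁.sum = x →
        (∀ b ∈ l₂, SAtom ({0} ∪ Set.Ici a : Set G) b) → l₂.sum = x →
        l₁.card = l₂.card) ↔
     ((∃ b : G, ∀ g : G, ∃ n : ℤ, g = n • b) ∧ ∀ g : G, 0 < g → a ≤ g)) := by
  change (SFactorial (conductiveMonoid a) ↔ SHalfFactorial (conductiveMonoid a)) ∧
    (SHalfFactorial (conductiveMonoid a) ↔ _)
  have hhf_iff : SHalfFactorial (conductiveMonoid a) ↔ ∀ g : G, 0 < g → ∃ n : ℕ, n • a = g :=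
    ⟨fun hhf _ => exists_nsmul_eq_of_sHalfFactorial ha hhf,
      fun hmul => (sFactorial_of_forall_exists_nsmul_eq ha hmul).sHalfFactorial⟩
  exact ⟨⟨SFactorial.sHalfFactorial, fun hhf => sFactorial_of_forall_exists_nsmul_eq ha
    (hhf_iff.1 hhf)⟩, hhf_iff.trans (forall_exists_nsmul_eq_iff ha)⟩

/-- For the conductive positive monoid `M_a = {0} ∪ G_{≥ a}` of a nontrivial totally
ordered abelian group `G` (with `a > 0`), the following are equivalent:
(a) `M_a` is a unique factorization monoid; (b) `M_a` is a half-factorial monoid;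
(c) `G` is cyclic and `a` is the least positive element of `G`. -/
theorem conductive_monoid_uf_iff_hf {G : Type*} [AddCommGroup G] [LinearOrder G] [IsOrderedAddMonoid G]
    [Nontrivial G] (a : G) (ha : 0 < a) :
    ((SAtomic ({0} ∪ Set.Ici a : Set G) ∧
      ∀ x ∈ ({0} ∪ Set.Ici a : Set G), ∀ l₁ l₂ : Multiset G,
        (∀ b ∈ l₁, SAtom ({0} ∪ Set.Ici a : Set G) b) → l₁.sum = x →
        (∀ b ∈ l₂, SAtom ({0} ∪ Set.Ici a : Set G) b) → l₂.sum = x →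
        l₁ = l₂) ↔
     (SAtomic ({0} ∪ Set.Ici a : Set G) ∧
      ∀ x ∈ ({0} ∪ Set.Ici a : Set G), ∀ l₁ l₂ : Multiset G,
        (∀ b ∈ l₁, SAtom ({0} ∪ Set.Ici a : Set G) b) → l₁.sum = x →
        (∀ b ∈ l₂, SAtom ({0} ∪ Set.Ici a : Set G) b) → l₂.sum = x →
        l₁.card = l₂.card)) ∧
    ((SAtomic ({0} ∪ Set.Ici a : Set G) ∧
      ∀ x ∈ ({0} ∪ Set.Ici a : Set G), ∀ l₁ l₂ : Multiset G,
        (∀ b ∈ l₁, SAtom ({0} ∪ Set.Ici a : Set G) b) → l₁.sum = x →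
        (∀ b ∈ l₂, SAtom ({0} ∪ Set.Ici a : Set G) b) → l₂.sum = x →
        l₁.card = l₂.card) ↔
     ((∃ b : G, ∀ g : G, ∃ n : ℤ, g = n • b) ∧ ∀ g : G, 0 < g → a ≤ g)) :=
  conductive_monoid_uf_iff_hf_general a ha
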